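/- arXiv:1403.4014 — 2 statements merged into one kernel-verified Lean document; each statement's English description precedes it below -/
import Mathlib

section
/- Let σ be a linear functional on polynomials over ℂ with moments g_n = ⟨σ, x^n⟩, and let (P_n) be monic polynomials orthogonal with respect to σ with ⟨σ, P_n P_m⟩ = h_n δ_{nm}, h_n ≠ 0. Let D be a linear operator with D x^n = μ_n x^{n-1} (μ_0 = 0, μ_n ≠ 0 for n ≥ 1), and suppose Q_n = D P_{n+1}/μ_{n+1} are orthogonal with respect to a functional τ with ⟨τ, Q_n Q_m⟩ = \tilde{h}_n δ_{nm}, \tilde{h}_n ≠ 0. Let R be the unique linear operator satisfying R Q_n = ν_{n+1} P_{n+1} with ν_{n+1} = μ_{n+1}\tilde{h}_n/h_{n+1}. Then for all polynomials f, g: ⟨τ, g · D f⟩ = ⟨σ, f · R g⟩. -/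
open Polynomial Finset

private lemma span_of_monic (P : ℕ → Polynomial ℂ)
    (hm : ∀ n, (P n).Monic) (hd : ∀ n, (P n).natDegree = n) :
    ∀ p : Polynomial ℂ, p ∈ Submodule.span ℂ (Set.range P) := by
  suffices H : ∀ N, ∀ p : Polynomial ℂ, p.natDegree ≤ N →
      p ∈ Submodule.span ℂ (Set.range P) by
    exact fun p => H p.natDegree p le_rfl
  intro N
  induction N with
  | zero =>
    intro p hp
    have h0 : P 0 = 1 := (hm 0).natDegree_eq_zero.mp (hd 0)
    obtain ⟨c, rfl⟩ : ∃ c, p = C c := ⟨p.coeff 0, eq_C_of_natDegree_le_zero hp⟩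
    have : (C c : Polynomial ℂ) = c • P 0 := by rw [h0, smul_eq_C_mul, mul_one]
    rw [this]
    exact Submodule.smul_mem _ _ (Submodule.subset_span ⟨0, rfl⟩)
  | succ N ih =>
    intro p hp
    set c := p.coeff (N + 1) with hc
    have hc1 : (P (N + 1)).coeff (N + 1) = 1 := by
      have := (hm (N + 1)).coeff_natDegree; rwa [hd] at this
    have hq : (p - c • P (N + 1)).natDegree ≤ N := by
      rw [Polynomial.natDegree_le_iff_coeff_eq_zero]
      intro M hM
      rcases eq_or_lt_of_le (Nat.succ_le_of_lt hM) with hM1 | hM1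
      · rw [coeff_sub, coeff_smul, ← hM1]
        simp [hc1, hc]
      · rw [coeff_sub, coeff_smul,
          Polynomial.coeff_eq_zero_of_natDegree_lt (lt_of_le_of_lt hp hM1),
          Polynomial.coeff_eq_zero_of_natDegree_lt (by rw [hd]; exact hM1)]
        simp
    have hmem : c • P (N + 1) ∈ Submodule.span ℂ (Set.range P) :=
      Submodule.smul_mem _ _ (Submodule.subset_span ⟨N + 1, rfl⟩)
    have : p - c • P (N + 1) + c • P (N + 1) ∈ Submodule.span ℂ (Set.range P) :=
      Submodule.add_mem _ (ih _ hq) hmem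
    simpa using this

theorem stmt_9 (σ τ : Polynomial ℂ →ₗ[ℂ] ℂ)
    (D R : Polynomial ℂ →ₗ[ℂ] Polynomial ℂ)
    (P Q : ℕ → Polynomial ℂ) (μ ν h ht : ℕ → ℂ)
    (hPmonic : ∀ n, (P n).Monic) (hPdeg : ∀ n, (P n).natDegree = n)
    (horthP : ∀ n m, σ (P n * P m) = if n = m then h n else 0)
    (hh : ∀ n, h n ≠ 0)
    (hμ0 : μ 0 = 0) (hμ : ∀ n, 1 ≤ n → μ n ≠ 0)
    (hD : ∀ n : ℕ, D (X^n) = μ n • X^(n-1))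
    (hQ : ∀ n, Q n = (μ (n+1))⁻¹ • D (P (n+1)))
    (horthQ : ∀ n m, τ (Q n * Q m) = if n = m then ht n else 0)
    (hht : ∀ n, ht n ≠ 0)
    (hν : ∀ n, ν (n+1) = μ (n+1) * ht n / h (n+1))
    (hR : ∀ n, R (Q n) = ν (n+1) • P (n+1)) :
    ∀ f g : Polynomial ℂ, τ (g * D f) = σ (f * R g) := by
  -- D applied to a general polynomial
  have hDgen : ∀ p : Polynomial ℂ,
      D p = ∑ k ∈ range (p.natDegree + 1), (p.coeff k * μ k) • X ^ (k - 1) := by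
    intro p
    conv_lhs => rw [p.as_sum_range]
    rw [map_sum]
    refine Finset.sum_congr rfl fun k _ => ?_
    have : (monomial k (p.coeff k) : Polynomial ℂ) = p.coeff k • X ^ k := by
      rw [smul_eq_C_mul, C_mul_X_pow_eq_monomial]
    rw [this, map_smul, hD k, smul_smul]
  have hPcoeff : ∀ n, (P n).coeff n = 1 := by
    intro n
    have := (hPmonic n).coeff_natDegree; rwa [hPdeg] at this
  -- degree and leading coefficient of D (P (n+1))
  have hDPdeg : ∀ n, (D (P (n + 1))).natDegree ≤ n := by
    intro n
    rw [hDgen]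
    refine Polynomial.natDegree_sum_le_of_forall_le _ _ fun k hk => ?_
    refine le_trans (Polynomial.natDegree_smul_le _ _) ?_
    rw [Polynomial.natDegree_X_pow]
    simp only [Finset.mem_range, hPdeg] at hk
    omega
  have hDPcoeff : ∀ n, (D (P (n + 1))).coeff n = μ (n + 1) := by
    intro n
    rw [hDgen, finset_sum_coeff]
    rw [Finset.sum_eq_single (n + 1)]
    · rw [coeff_smul, Nat.add_sub_cancel, coeff_X_pow, if_pos rfl]
      simp [hPcoeff]
    · intro k hk hkne
      rcases Nat.eq_zero_or_pos k with rfl | hk0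
      · simp [hμ0]
      · rw [coeff_smul, coeff_X_pow, if_neg (by omega : ¬ n = k - 1)]
        simp
    · intro hk
      simp only [Finset.mem_range, hPdeg] at hk
      omega
  have hQdeg : ∀ n, (Q n).natDegree = n := by
    intro n
    have hμn := hμ (n + 1) (by omega)
    have hcoeff : (Q n).coeff n = 1 := by
      rw [hQ n, coeff_smul, hDPcoeff, smul_eq_mul, inv_mul_cancel₀ hμn]
    refine le_antisymm ?_ (Polynomial.le_natDegree_of_ne_zero (by rw [hcoeff]; norm_num))
    refine le_trans (by rw [hQ n]; exact Polynomial.natDegree_smul_le _ _) (hDPdeg n)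
  have hQmonic : ∀ n, (Q n).Monic := by
    intro n
    unfold Polynomial.Monic Polynomial.leadingCoeff
    rw [hQdeg n, hQ n, coeff_smul, hDPcoeff, smul_eq_mul,
      inv_mul_cancel₀ (hμ (n + 1) (by omega))]
  -- D P (m+1) = μ (m+1) • Q m
  have hDP : ∀ m, D (P (m + 1)) = μ (m + 1) • Q m := by
    intro m
    rw [hQ m, smul_smul, mul_inv_cancel₀ (hμ (m + 1) (by omega)), one_smul]
  -- base case on pairs of basis vectors
  have hbase : ∀ m n, τ (Q n * D (P m)) = σ (P m * R (Q n)) := by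
    intro m n
    rcases m with _ | m
    · have h0 : P 0 = 1 := (hPmonic 0).natDegree_eq_zero.mp (hPdeg 0)
      have hD0 : D (P 0) = 0 := by
        rw [h0, ← pow_zero (X : Polynomial ℂ), hD 0, hμ0, zero_smul]
      rw [hD0, mul_zero, map_zero, hR n, mul_smul_comm, map_smul,
        horthP 0 (n + 1), if_neg (by omega)]
      simp
    · rw [hDP m, hR n, mul_smul_comm, mul_smul_comm, map_smul, map_smul,
        horthQ n m, horthP (m + 1) (n + 1)]
      simp only [smul_eq_mul]
      by_cases hmn : n = m
      · subst hmn
        rw [if_pos rfl, if_pos rfl, hν n]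
        field_simp [hh (n + 1)]
      · rw [if_neg hmn, if_neg (by omega), mul_zero, mul_zero]
  -- extend by linearity in f
  have hstep : ∀ f : Polynomial ℂ, ∀ n, τ (Q n * D f) = σ (f * R (Q n)) := by
    intro f n
    have hf := span_of_monic P hPmonic hPdeg f
    induction hf using Submodule.span_induction with
    | mem x hx => obtain ⟨m, rfl⟩ := hx; exact hbase m n
    | zero => simp
    | add x y hx hy ihx ihy =>
      rw [map_add, mul_add, map_add, ihx, ihy, add_mul, map_add]
    | smul a x hx ihx =>
      rw [map_smul, mul_smul_comm, map_smul, ihx, smul_mul_assoc, map_smul]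
  -- extend by linearity in g
  intro f g
  have hg := span_of_monic Q hQmonic hQdeg g
  induction hg using Submodule.span_induction with
  | mem x hx => obtain ⟨n, rfl⟩ := hx; exact hstep f n
  | zero => simp
  | add x y hx hy ihx ihy =>
    rw [add_mul, map_add, ihx, ihy, map_add, mul_add, map_add]
  | smul a x hx ihx =>
    rw [smul_mul_assoc, map_smul, ihx, map_smul, mul_smul_comm, map_smul]
end

section
/- Let μ_n be a complex sequence with μ_0 = 0, μ_n ≠ 0 for n ≥ 1, and let g_n (g_0 = 1) and \tilde{g}_n be moment sequences satisfying μ_n μ_{m+1} \tilde{g}_{n+m-1} = g_{n+m+1} - g_{m+1} g_n for all n ≥ 1, m ≥ 0. Then \tilde{g}_n = (g_{n+2} - g_1 g_{n+1})/(μ_1 μ_{n+1}) for all n ≥ 0, and the system is equivalent to the relations μ_n μ_m (g_{n+m} - g_1 g_{n+m-1}) = μ_1 μ_{n+m-1}(g_{n+m} - g_m g_n) for all n, m ≥ 1. -/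
theorem stmt_14 (μ g : ℕ → ℂ) (hμ0 : μ 0 = 0) (hμ : ∀ n, 1 ≤ n → μ n ≠ 0)
    (hg0 : g 0 = 1) :
    ((∃ tg : ℕ → ℂ, ∀ n, 1 ≤ n → ∀ m : ℕ,
        μ n * μ (m+1) * tg (n+m-1) = g (n+m+1) - g (m+1) * g n) ↔
      (∀ n m : ℕ, 1 ≤ n → 1 ≤ m →
        μ n * μ m * (g (n+m) - g 1 * g (n+m-1)) =
          μ 1 * μ (n+m-1) * (g (n+m) - g m * g n))) ∧
    (∀ tg : ℕ → ℂ,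
      (∀ n, 1 ≤ n → ∀ m : ℕ,
        μ n * μ (m+1) * tg (n+m-1) = g (n+m+1) - g (m+1) * g n) →
      ∀ n, tg n = (g (n+2) - g 1 * g (n+1)) / (μ 1 * μ (n+1))) := by
  constructor
  · constructor
    · rintro ⟨tg, h⟩ n m hn hm
      have h1 := h n hn (m-1)
      have h2 := h 1 le_rfl (n+m-2)
      rw [show m-1+1 = m by omega, show n+(m-1)-1 = n+m-2 by omega,
        show n+(m-1)+1 = n+m by omega] at h1
      rw [show 1+(n+m-2)-1 = n+m-2 by omega, show (n+m-2)+1 = n+m-1 by omega,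
        show 1+(n+m-2)+1 = n+m by omega] at h2
      linear_combination μ 1 * μ (n+m-1) * h1 - μ n * μ m * h2
    · intro H
      refine ⟨fun k => (g (k+2) - g 1 * g (k+1)) / (μ 1 * μ (k+1)), ?_⟩
      intro n hn m
      have H' := H n (m+1) hn (by omega)
      rw [show n+(m+1)-1 = n+m by omega, show n+(m+1) = n+m+1 by omega] at H'
      beta_reduce
      rw [show n+m-1+2 = n+m+1 by omega, show n+m-1+1 = n+m by omega]
      have h1 : μ 1 ≠ 0 := hμ 1 le_rfl
      have h2 : μ (n+m) ≠ 0 := hμ _ (by omega)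
      field_simp
      linear_combination H'
  · intro tg h n
    have h1 := h 1 le_rfl n
    rw [show 1+n-1 = n by omega, show 1+n+1 = n+2 by omega] at h1
    have hμ1 : μ 1 ≠ 0 := hμ 1 le_rfl
    have hμn : μ (n+1) ≠ 0 := hμ _ (by omega)
    field_simp
    linear_combination h1
end
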